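/- arXiv:2003.09126 — 2 statements merged into one kernel-verified Lean document; each statement's English description precedes it below -/
import Mathlib

section
/- For the sequence U_n = 1_{A_{n-1}^c ∩ ... ∩ A_{n-κ+1}^c} + (1 - 1_{A_{n-1}^c ∩ ... ∩ A_{n-κ+1}^c})·1_{A_n} built from independent events (A_n)_{n∈ℤ} each of probability p, one has P(U_n = 0, U_{n+1} = 0, ..., U_{n+κ-1} = 0) = 0 for every n; i.e., it is almost impossible to have κ consecutive zeros. -/
/-!
`U_m = 0` forces `A_m` to fail (otherwise `U_m = 1`) and some `A_{m-i}`, `1 ≤ i ≤ κ - 1`, to occur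
(otherwise the clock is reset and `U_m = 1`). On `κ` consecutive zeros `U_n = ⋯ = U_{n+κ-1} = 0`
the first fact makes `A_n, …, A_{n+κ-2}` fail, so the second one cannot hold at `m = n + κ - 1`:
the event is empty, not merely null.
-/

open MeasureTheory
open scoped Classical

def IsStoppedClock {Ω : Type*} (κ : ℕ) (A : ℤ → Set Ω) (U : ℤ → Ω → ℕ) : Prop :=
  ∀ (n : ℤ) (ω : Ω),
    U n ω = if ∀ i ∈ Finset.Icc 1 (κ - 1), ω ∉ A (n - (i : ℤ)) then 1
            else if ω ∈ A n then 1 else 0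

namespace IsStoppedClock

variable {Ω : Type*} {κ : ℕ} {A : ℤ → Set Ω} {U : ℤ → Ω → ℕ} {m : ℤ} {ω : Ω}

theorem notMem_of_eq_zero (hU : IsStoppedClock κ A U) (h : U m ω = 0) : ω ∉ A m := by
  rw [hU] at h
  split_ifs at h with _ hA
  exact hA

theorem exists_mem_of_eq_zero (hU : IsStoppedClock κ A U) (h : U m ω = 0) :
    ∃ i ∈ Finset.Icc 1 (κ - 1), ω ∈ A (m - (i : ℤ)) := by
  rw [hU] at h
  split_ifs at h with hreset
  push Not at hreset
  exact hreset

theorem setOf_forall_range_eq_zero_eq_empty (hκ : 1 ≤ κ) (hU : IsStoppedClock κ A U) (n : ℤ) :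
    {ω | ∀ j ∈ Finset.range κ, U (n + (j : ℤ)) ω = 0} = ∅ := by
  refine Set.eq_empty_of_forall_notMem fun ω hzero => ?_
  obtain ⟨i, hi, hmem⟩ :=
    hU.exists_mem_of_eq_zero (hzero (κ - 1) (Finset.mem_range.mpr (by omega)))
  rw [Finset.mem_Icc] at hi
  have hidx : n + ((κ - 1 : ℕ) : ℤ) - (i : ℤ) = n + ((κ - 1 - i : ℕ) : ℤ) := by
    push_cast [Nat.cast_sub hi.2, Nat.cast_sub hκ]
    ring
  rw [hidx] at hmem
  exact hU.notMem_of_eq_zero (hzero (κ - 1 - i) (Finset.mem_range.mpr (by omega))) hmem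

end IsStoppedClock

theorem stopped_clock_no_kappa_zeros_general
    {Ω : Type*} [MeasurableSpace Ω] (P : Measure Ω)
    (κ : ℕ) (hκ : 2 ≤ κ)
    (A : ℤ → Set Ω)
    (U : ℤ → Ω → ℕ)
    (hU : ∀ (n : ℤ) (ω : Ω),
      U n ω = if ∀ i ∈ Finset.Icc 1 (κ - 1), ω ∉ A (n - (i : ℤ)) then 1
              else if ω ∈ A n then 1 else 0) :
    ∀ n : ℤ, P {ω | ∀ j ∈ Finset.range κ, U (n + (j : ℤ)) ω = 0} = 0 := fun n => by
  rw [IsStoppedClock.setOf_forall_range_eq_zero_eq_empty (by omega) hU n, measure_empty]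

/-- For the sequence `U_n` built from independent events
`(A_n)_{n ∈ ℤ}` each of probability `p` (with `κ ≥ 2`), it is almost
impossible to have `κ` consecutive zeros:
`P(U_n = 0, U_{n+1} = 0, ..., U_{n+κ-1} = 0) = 0` for every `n`. -/
theorem stopped_clock_no_kappa_zeros
    {Ω : Type*} [MeasurableSpace Ω] (P : Measure Ω) [IsProbabilityMeasure P]
    (κ : ℕ) (hκ : 2 ≤ κ)
    (A : ℤ → Set Ω) (hAmeas : ∀ n, MeasurableSet (A n))
    (hAindep : ProbabilityTheory.iIndepSet A P)
    (p : ℝ) (hp0 : 0 ≤ p) (hp1 : p ≤ 1)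
    (hp : ∀ n, P (A n) = ENNReal.ofReal p)
    (U : ℤ → Ω → ℕ)
    (hU : ∀ (n : ℤ) (ω : Ω),
      U n ω = if ∀ i ∈ Finset.Icc 1 (κ - 1), ω ∉ A (n - (i : ℤ)) then 1
              else if ω ∈ A n then 1 else 0) :
    ∀ n : ℤ, P {ω | ∀ j ∈ Finset.range κ, U (n + (j : ℤ)) ω = 0} = 0 :=
  stopped_clock_no_kappa_zeros_general P κ hκ A U hU
end

section
/- In the stopped clock model, if (X_n) is lag-m* tail independent (λ(X_{n+m*}|X_n) = 0) for all m* ≥ max(1, m-κ+1), then λ(Y_{n+m}|Y_n) = P(U_1 = 0, ..., U_m = 0)·1_{m ≤ κ-1}; in particular (Y_n) is lag-m tail independent for all m ≥ κ. -/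
/-!
Almost surely every window `(b - κ, b]` contains a tick of the clock `U`, so `Y_b = X_t` for
the last tick `t` of that window, an event determined by `U` alone. Independence of `X` and `U`
then gives `P(Y_b > x, U ∈ S) = P(X_0 > x) P(U ∈ S)` for every path event `S`; with `S` the
event `B` of no tick in `(n, n + m]`, on which `Y_{n+m} = Y_n`, this contributes exactly
`P(B)` to `P(Y_{n+m} > x | Y_n > x)`. Off `B`, `Y_{n+m}` and `Y_n` are values of `X` at two
times more than `m - κ` apart, so the rest is bounded by finitely many tail ratios of `X`,
which vanish. Finally `P(B) = P(U_1 = ⋯ = U_m = 0)` by stationarity, and `P(B) = 0` when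
`m ≥ κ`.
-/

open MeasureTheory ProbabilityTheory Filter Topology
open scoped ENNReal

namespace StoppedClock

def zerosOn (s : Set ℤ) : Set (ℤ → ℕ) := {u | ∀ j ∈ s, u j = 0}

def lastTickAt (b t : ℤ) : Set (ℤ → ℕ) := {u | u t = 1} ∩ zerosOn (Set.Ioc t b)

variable {u : ℤ → ℕ} {x y : ℤ → ℝ}

theorem measurableSet_zerosOn (s : Set ℤ) : MeasurableSet (zerosOn s) := by
  have : zerosOn s = ⋂ j ∈ s, (fun u : ℤ → ℕ => u j) ⁻¹' {0} := by
    ext u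
    simp [zerosOn]
  rw [this]
  exact MeasurableSet.biInter s.to_countable fun j _ =>
    measurable_pi_apply j (measurableSet_singleton 0)

theorem measurableSet_lastTickAt (b t : ℤ) : MeasurableSet (lastTickAt b t) :=
  (measurable_pi_apply t (measurableSet_singleton 1)).inter (measurableSet_zerosOn _)

theorem zerosOn_anti {s s' : Set ℤ} (h : s ⊆ s') : zerosOn s' ⊆ zerosOn s :=
  fun _ hu j hj => hu j (h hj)

theorem mem_zerosOn_Ioc_iff {a : ℤ} {k : ℕ} :
    u ∈ zerosOn (Set.Ioc a (a + k)) ↔ ∀ j ∈ Finset.range k, u (a + 1 + j) = 0 := by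
  constructor
  · intro h j hj
    exact h _ (by simp at hj ⊢; omega)
  · intro h j hj
    rw [Set.mem_Ioc] at hj
    have := h (j - a - 1).toNat (by simp; omega)
    rwa [show a + 1 + ((j - a - 1).toNat : ℤ) = j by omega] at this

theorem pairwiseDisjoint_lastTickAt (b : ℤ) : (Set.Iic b).PairwiseDisjoint (lastTickAt b) := by
  intro t ht t' ht' hne
  wlog hlt : t < t' generalizing t t'
  · exact (this ht' ht hne.symm (lt_of_le_of_ne (not_lt.1 hlt) hne.symm)).symm
  refine Set.disjoint_left.2 fun u hu hu' => ?_
  have h0 : u t' = 0 := hu.2 t' ⟨hlt, ht'⟩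
  have h1 : u t' = 1 := hu'.1
  omega

-- The witness is the latest tick in `(a, b]`.
theorem exists_mem_lastTickAt (hu : ∀ j, u j = 0 ∨ u j = 1) {a b : ℤ}
    (h : u ∉ zerosOn (Set.Ioc a b)) : ∃ t ∈ Finset.Ioc a b, u ∈ lastTickAt b t := by
  classical
  set ticks := (Finset.Ioc a b).filter (fun j => u j = 1)
  have hne : ticks.Nonempty := by
    simp only [zerosOn, Set.mem_ofPred_eq, not_forall] at h
    obtain ⟨j, hj, hj0⟩ := h
    exact ⟨j, Finset.mem_filter.2 ⟨by simpa using hj, (hu j).resolve_left hj0⟩⟩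
  obtain ⟨t, ht, htmax⟩ := ticks.exists_max_image id hne
  obtain ⟨htab, ht1⟩ := Finset.mem_filter.1 ht
  refine ⟨t, htab, ht1, fun j hj => (hu j).resolve_right fun hj1 => ?_⟩
  rw [Finset.mem_Ioc] at htab
  rw [Set.mem_Ioc] at hj
  have := htmax j (Finset.mem_filter.2 ⟨Finset.mem_Ioc.2 ⟨by omega, hj.2⟩, hj1⟩)
  exact absurd this (not_le.2 hj.1)

theorem stopped_eq_of_mem_zerosOn (hrec : ∀ n, y n = if u n = 1 then x n else y (n - 1))
    {a b : ℤ} (hab : a ≤ b) (hu : u ∈ zerosOn (Set.Ioc a b)) : y b = y a := by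
  induction b, hab using Int.leInduction with
  | base => rfl
  | succ b hab ih =>
    rw [hrec, if_neg (by rw [hu (b + 1) ⟨by omega, le_rfl⟩]; simp), add_sub_cancel_right]
    exact ih (zerosOn_anti (Set.Ioc_subset_Ioc_right (by omega)) hu)

theorem stopped_eq_of_mem_lastTickAt (hrec : ∀ n, y n = if u n = 1 then x n else y (n - 1))
    {b t : ℤ} (htb : t ≤ b) (hu : u ∈ lastTickAt b t) : y b = x t := by
  rw [stopped_eq_of_mem_zerosOn hrec htb hu.2, hrec]
  exact if_pos hu.1

/-- At level `x`, the ratio `P(V > x | W > x)` whose limit is the tail dependence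
coefficient `λ(V | W)`. -/
noncomputable def tailRatio {Ω : Type*} [MeasurableSpace Ω] (P : Measure Ω) (V W : Ω → ℝ)
    (x : ℝ) : ℝ :=
  (P {ω | x < V ω ∧ x < W ω}).toReal / (P {ω | x < W ω}).toReal

section Measure

variable {Ω : Type*} [MeasurableSpace Ω] {P : Measure Ω} {X Y : Ω → ℤ → ℝ} {U : Ω → ℤ → ℕ}
  {κ : ℕ}

theorem ae_notMem_zerosOn_Ioc
    (h : ∀ a : ℤ, P {ω | ∀ j ∈ Finset.range κ, U ω (a + j) = 0} = 0) :
    ∀ᵐ ω ∂P, ∀ b : ℤ, U ω ∉ zerosOn (Set.Ioc (b - κ) b) := by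
  refine ae_all_iff.2 fun b => (measure_eq_zero_iff_ae_notMem (s := U ⁻¹' zerosOn _)).1 ?_
  have hset : U ⁻¹' zerosOn (Set.Ioc (b - κ) b) =
      {ω | ∀ j ∈ Finset.range κ, U ω (b - κ + 1 + j) = 0} := by
    ext ω
    rw [Set.mem_preimage, Set.mem_ofPred_eq, ← mem_zerosOn_Ioc_iff, sub_add_cancel]
  rw [hset]
  exact h (b - κ + 1)

theorem measure_preimage_zerosOn_Ioc_add (hU : Measurable U)
    (hstat : ∀ k : ℤ, P.map (fun ω n => U ω (n + k)) = P.map U) (n m : ℤ) :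
    P (U ⁻¹' zerosOn (Set.Ioc n (n + m))) = P (U ⁻¹' zerosOn (Set.Ioc 0 m)) := by
  have hshift : Measurable fun ω k => U ω (k + n) := measurable_pi_lambda _ fun _ => hU.eval
  have h := congrArg (· (zerosOn (Set.Ioc 0 m))) (hstat n)
  rw [Measure.map_apply hshift (measurableSet_zerosOn _),
    Measure.map_apply hU (measurableSet_zerosOn _)] at h
  rw [← h]
  congr 1
  ext ω
  simp only [Set.mem_preimage, zerosOn, Set.mem_ofPred_eq, Set.mem_Ioc]
  constructor
  · intro h j hj
    exact h (j + n) (by omega)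
  · intro h j hj
    simpa using h (j - n) (by omega)

theorem measure_stopped_mem_inter_eq_sum (hX : Measurable X) (hU : Measurable U)
    (hU01 : ∀ ω n, U ω n = 0 ∨ U ω n = 1)
    (hrec : ∀ ω n, Y ω n = if U ω n = 1 then X ω n else Y ω (n - 1))
    (hrun : ∀ᵐ ω ∂P, ∀ b : ℤ, U ω ∉ zerosOn (Set.Ioc (b - κ) b))
    (b : ℤ) {I : Set ℝ} (hI : MeasurableSet I) {S : Set (ℤ → ℕ)} (hS : MeasurableSet S) :
    P ({ω | Y ω b ∈ I} ∩ U ⁻¹' S) =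
      ∑ t ∈ Finset.Ioc (b - κ) b, P (U ⁻¹' (lastTickAt b t ∩ S) ∩ {ω | X ω t ∈ I}) := by
  have hle : ∀ t ∈ Finset.Ioc (b - κ) b, t ≤ b := fun t ht => (Finset.mem_Ioc.1 ht).2
  have hdisj : (↑(Finset.Ioc (b - κ) b) : Set ℤ).PairwiseDisjoint
      fun t => U ⁻¹' (lastTickAt b t ∩ S) ∩ {ω | X ω t ∈ I} := fun t ht t' ht' hne =>
    ((pairwiseDisjoint_lastTickAt b (hle t ht) (hle t' ht') hne).preimage U).mono
      (fun _ h => h.1.1) (fun _ h => h.1.1)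
  rw [← measure_biUnion_finset hdisj fun t _ =>
    (hU ((measurableSet_lastTickAt b t).inter hS)).inter (hX.eval hI)]
  refine measure_congr (eventuallyEq_set.2 ?_)
  filter_upwards [hrun] with ω hω
  obtain ⟨t, ht, htL⟩ := exists_mem_lastTickAt (hU01 ω) (hω b)
  simp only [Set.mem_inter_iff, Set.mem_ofPred_eq, Set.mem_preimage, Set.mem_iUnion, exists_prop]
  constructor
  · rintro ⟨hY, hS⟩
    exact ⟨t, ht, ⟨htL, hS⟩, by rwa [← stopped_eq_of_mem_lastTickAt (hrec ω) (hle t ht) htL]⟩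
  · rintro ⟨t', ht', ⟨ht'L, hS⟩, hX⟩
    exact ⟨by rwa [stopped_eq_of_mem_lastTickAt (hrec ω) (hle t' ht') ht'L], hS⟩

theorem measure_lt_stopped_inter_preimage (hX : Measurable X) (hU : Measurable U)
    (hindep : IndepFun X U P) (hU01 : ∀ ω n, U ω n = 0 ∨ U ω n = 1)
    (hrec : ∀ ω n, Y ω n = if U ω n = 1 then X ω n else Y ω (n - 1))
    (hrun : ∀ᵐ ω ∂P, ∀ b : ℤ, U ω ∉ zerosOn (Set.Ioc (b - κ) b))
    {x : ℝ} {c : ℝ≥0∞} (hc : ∀ t, P {ω | x < X ω t} = c)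
    (b : ℤ) {S : Set (ℤ → ℕ)} (hS : MeasurableSet S) :
    P ({ω | x < Y ω b} ∩ U ⁻¹' S) = c * P (U ⁻¹' S) := by
  calc P ({ω | x < Y ω b} ∩ U ⁻¹' S)
      = ∑ t ∈ Finset.Ioc (b - κ) b,
          P (U ⁻¹' (lastTickAt b t ∩ S) ∩ {ω | X ω t ∈ Set.Ioi x}) :=
        measure_stopped_mem_inter_eq_sum hX hU hU01 hrec hrun b measurableSet_Ioi hS
    _ = ∑ t ∈ Finset.Ioc (b - κ) b,
          c * P (U ⁻¹' (lastTickAt b t ∩ S) ∩ {ω | X ω t ∈ Set.univ}) := by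
        refine Finset.sum_congr rfl fun t _ => ?_
        rw [Set.inter_comm, ← hc t]
        simpa using hindep.measure_inter_preimage_eq_mul {f | x < f t} _
          (measurable_pi_apply t measurableSet_Ioi) ((measurableSet_lastTickAt b t).inter hS)
    _ = c * P (U ⁻¹' S) := by
        rw [← Finset.mul_sum,
          ← measure_stopped_mem_inter_eq_sum hX hU hU01 hrec hrun b MeasurableSet.univ hS]
        simp

theorem measure_lt_stopped [IsProbabilityMeasure P] (hX : Measurable X) (hU : Measurable U)
    (hindep : IndepFun X U P) (hU01 : ∀ ω n, U ω n = 0 ∨ U ω n = 1)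
    (hrec : ∀ ω n, Y ω n = if U ω n = 1 then X ω n else Y ω (n - 1))
    (hrun : ∀ᵐ ω ∂P, ∀ b : ℤ, U ω ∉ zerosOn (Set.Ioc (b - κ) b))
    {x : ℝ} {c : ℝ≥0∞} (hc : ∀ t, P {ω | x < X ω t} = c) (b : ℤ) :
    P {ω | x < Y ω b} = c := by
  simpa using measure_lt_stopped_inter_preimage hX hU hindep hU01 hrec hrun hc b
    MeasurableSet.univ

/-- Off the event of no tick in `(n, n + m]`, the stopped values at `n` and `n + m` are
values of `X` at two times at least `m - κ + 1` apart. -/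
theorem measure_lt_stopped_diff_le (hU01 : ∀ ω n, U ω n = 0 ∨ U ω n = 1)
    (hrec : ∀ ω n, Y ω n = if U ω n = 1 then X ω n else Y ω (n - 1))
    (hrun : ∀ᵐ ω ∂P, ∀ b : ℤ, U ω ∉ zerosOn (Set.Ioc (b - κ) b)) (x : ℝ) (n : ℤ) (m : ℕ) :
    P ({ω | x < Y ω (n + m) ∧ x < Y ω n} \ U ⁻¹' zerosOn (Set.Ioc n (n + m))) ≤
      ∑ p ∈ Finset.Ioc (n - κ) n ×ˢ Finset.Ioc (max n (n + m - κ)) (n + m),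
        P {ω | x < X ω p.2 ∧ x < X ω p.1} := by
  refine (measure_mono_ae ?_).trans (measure_biUnion_finset_le _ _)
  filter_upwards [hrun] with ω hω ⟨⟨hYm, hYn⟩, hB⟩
  obtain ⟨s, hs, hsL⟩ := exists_mem_lastTickAt (hU01 ω) (hω n)
  obtain ⟨t, ht, htL⟩ := exists_mem_lastTickAt (hU01 ω) (hω (n + m))
  rw [Finset.mem_Ioc] at hs ht
  have hnt : n < t := not_le.1 fun htn =>
    hB (zerosOn_anti (Set.Ioc_subset_Ioc_left htn) htL.2)
  refine Set.mem_iUnion₂.2 ⟨(s, t), Finset.mem_product.2 ⟨Finset.mem_Ioc.2 hs,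
    Finset.mem_Ioc.2 ⟨max_lt hnt ht.1, ht.2⟩⟩, ?_, ?_⟩
  · rwa [← stopped_eq_of_mem_lastTickAt (hrec ω) ht.2 htL]
  · rwa [← stopped_eq_of_mem_lastTickAt (hrec ω) hs.2 hsL]

theorem measure_lt_stopped_inter_zerosOn (hX : Measurable X) (hU : Measurable U)
    (hindep : IndepFun X U P) (hU01 : ∀ ω n, U ω n = 0 ∨ U ω n = 1)
    (hrec : ∀ ω n, Y ω n = if U ω n = 1 then X ω n else Y ω (n - 1))
    (hrun : ∀ᵐ ω ∂P, ∀ b : ℤ, U ω ∉ zerosOn (Set.Ioc (b - κ) b))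
    {x : ℝ} {c : ℝ≥0∞} (hc : ∀ t, P {ω | x < X ω t} = c) (n : ℤ) (m : ℕ) :
    P ({ω | x < Y ω (n + m) ∧ x < Y ω n} ∩ U ⁻¹' zerosOn (Set.Ioc n (n + m))) =
      c * P (U ⁻¹' zerosOn (Set.Ioc n (n + m))) := by
  have hnoTick : {ω | x < Y ω (n + m) ∧ x < Y ω n} ∩ U ⁻¹' zerosOn (Set.Ioc n (n + m)) =
      {ω | x < Y ω n} ∩ U ⁻¹' zerosOn (Set.Ioc n (n + m)) := by
    ext ω
    simp only [Set.mem_inter_iff, Set.mem_ofPred_eq, Set.mem_preimage]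
    constructor
    · rintro ⟨⟨_, h⟩, hω⟩
      exact ⟨h, hω⟩
    · rintro ⟨h, hω⟩
      refine ⟨⟨?_, h⟩, hω⟩
      rwa [stopped_eq_of_mem_zerosOn (hrec ω) (by omega) hω]
  rw [hnoTick, measure_lt_stopped_inter_preimage hX hU hindep hU01 hrec hrun hc n
    (measurableSet_zerosOn _)]

theorem tendsto_measure_lt_stopped_diff_div [IsFiniteMeasure P]
    (hU01 : ∀ ω n, U ω n = 0 ∨ U ω n = 1)
    (hrec : ∀ ω n, Y ω n = if U ω n = 1 then X ω n else Y ω (n - 1))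
    (hrun : ∀ᵐ ω ∂P, ∀ b : ℤ, U ω ∉ zerosOn (Set.Ioc (b - κ) b))
    {q : ℝ → ℝ≥0∞} (hq : ∀ x, 0 < x → ∀ t, P {ω | x < X ω t} = q x) {m : ℕ}
    (hti : ∀ s t : ℤ, s < t → (m : ℤ) - κ < t - s →
      Tendsto (tailRatio P (fun ω => X ω t) (fun ω => X ω s)) atTop (𝓝 0)) (n : ℤ) :
    Tendsto (fun x => (P ({ω | x < Y ω (n + m) ∧ x < Y ω n} \
      U ⁻¹' zerosOn (Set.Ioc n (n + m)))).toReal / (q x).toReal) atTop (𝓝 0) := by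
  set pairs := Finset.Ioc (n - κ) n ×ˢ Finset.Ioc (max n (n + m - κ)) (n + m)
  have hsum : Tendsto (fun x => ∑ p ∈ pairs,
      tailRatio P (fun ω => X ω p.2) (fun ω => X ω p.1) x) atTop (𝓝 0) := by
    rw [← Finset.sum_const_zero (s := pairs)]
    refine tendsto_finsetSum pairs fun p hp => ?_
    simp only [pairs, Finset.mem_product, Finset.mem_Ioc, max_lt_iff] at hp
    exact hti p.1 p.2 (by omega) (by omega)
  refine squeeze_zero' (Eventually.of_forall fun x => by positivity) ?_ hsum
  filter_upwards [eventually_gt_atTop 0] with x hx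
  simp only [tailRatio, hq x hx, ← Finset.sum_div]
  refine div_le_div_of_nonneg_right ?_ ENNReal.toReal_nonneg
  rw [← ENNReal.toReal_sum fun _ _ => measure_ne_top _ _]
  exact ENNReal.toReal_mono (ENNReal.sum_ne_top.2 fun _ _ => measure_ne_top _ _)
    (measure_lt_stopped_diff_le hU01 hrec hrun x n m)

theorem tendsto_tailRatio_stopped [IsProbabilityMeasure P] (hX : Measurable X)
    (hU : Measurable U) (hindep : IndepFun X U P) (hU01 : ∀ ω n, U ω n = 0 ∨ U ω n = 1)
    (hrec : ∀ ω n, Y ω n = if U ω n = 1 then X ω n else Y ω (n - 1))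
    (hrun : ∀ᵐ ω ∂P, ∀ b : ℤ, U ω ∉ zerosOn (Set.Ioc (b - κ) b))
    {q : ℝ → ℝ≥0∞} (hq : ∀ x, 0 < x → ∀ t, P {ω | x < X ω t} = q x)
    (hq0 : ∀ x, 0 < x → q x ≠ 0) {m : ℕ}
    (hti : ∀ s t : ℤ, s < t → (m : ℤ) - κ < t - s →
      Tendsto (tailRatio P (fun ω => X ω t) (fun ω => X ω s)) atTop (𝓝 0)) (n : ℤ) :
    Tendsto (tailRatio P (fun ω => Y ω (n + m)) (fun ω => Y ω n)) atTop
      (𝓝 (P (U ⁻¹' zerosOn (Set.Ioc n (n + m)))).toReal) := by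
  set B := U ⁻¹' zerosOn (Set.Ioc n (n + m))
  set E : ℝ → Set Ω := fun x => {ω | x < Y ω (n + m) ∧ x < Y ω n}
  have hsplit : ∀ᶠ x in atTop, tailRatio P (fun ω => Y ω (n + m)) (fun ω => Y ω n) x
      = (P B).toReal + (P (E x \ B)).toReal / (q x).toReal := by
    filter_upwards [eventually_gt_atTop 0] with x hx
    have hqtop : q x ≠ ⊤ := hq x hx 0 ▸ measure_ne_top _ _
    have hqx : (q x).toReal ≠ 0 := ENNReal.toReal_ne_zero.2 ⟨hq0 x hx, hqtop⟩
    rw [tailRatio, ← measure_inter_add_sdiff (E x) (hU (measurableSet_zerosOn _)),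
      measure_lt_stopped_inter_zerosOn hX hU hindep hU01 hrec hrun (hq x hx) n m,
      measure_lt_stopped hX hU hindep hU01 hrec hrun (hq x hx) n,
      ENNReal.toReal_add (ENNReal.mul_ne_top hqtop (measure_ne_top _ _)) (measure_ne_top _ _),
      ENNReal.toReal_mul, add_div, mul_div_cancel_left₀ _ hqx]
  simpa using (tendsto_const_nhds.add (tendsto_measure_lt_stopped_diff_div hU01 hrec hrun hq
    hti n)).congr' (hsplit.mono fun x h => h.symm)

theorem measure_lt_eq_one_sub_of_frechet [IsProbabilityMeasure P] {Z : Ω → ℝ}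
    (hZ : Measurable Z)
    (hF : ∀ x, 0 < x → P {ω | Z ω ≤ x} = ENNReal.ofReal (Real.exp (-1 / x)))
    {x : ℝ} (hx : 0 < x) : P {ω | x < Z ω} = 1 - ENNReal.ofReal (Real.exp (-1 / x)) := by
  rw [← hF x hx, ← prob_compl_eq_one_sub (μ := P) (s := {ω | Z ω ≤ x}) (hZ measurableSet_Iic)]
  congr 1
  ext ω
  simp [not_le]

end Measure

theorem one_sub_ofReal_exp_neg_inv_ne_zero {x : ℝ} (hx : 0 < x) :
    1 - ENNReal.ofReal (Real.exp (-1 / x)) ≠ 0 := by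
  rw [ne_eq, tsub_eq_zero_iff_le, not_le, ENNReal.ofReal_lt_one, Real.exp_lt_one_iff]
  exact div_neg_of_neg_of_pos (by norm_num) hx

end StoppedClock

open StoppedClock

theorem stopped_clock_lagm_tail_independence_general
    {Ω : Type*} [MeasurableSpace Ω] (P : Measure Ω) [IsProbabilityMeasure P]
    (κ : ℕ)
    (X : ℤ → Ω → ℝ) (U : ℤ → Ω → ℕ) (Y : ℤ → Ω → ℝ)
    (hXmeas : ∀ n, Measurable (X n)) (hUmeas : ∀ n, Measurable (U n))
    (hU01 : ∀ (n : ℤ) (ω : Ω), U n ω = 0 ∨ U n ω = 1)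
    (hXF : ∀ (n : ℤ) (x : ℝ), 0 < x →
      P {ω | X n ω ≤ x} = ENNReal.ofReal (Real.exp (-1 / x)))
    (hUstat : ∀ k : ℤ, Measure.map (fun ω (n : ℤ) => U (n + k) ω) P =
      Measure.map (fun ω (n : ℤ) => U n ω) P)
    (hindep : IndepFun (fun ω (n : ℤ) => X n ω) (fun ω (n : ℤ) => U n ω) P)
    (hnoκ : ∀ n : ℤ, P {ω | ∀ j ∈ Finset.range κ, U (n + (j : ℤ)) ω = 0} = 0)
    (hrec : ∀ (n : ℤ) (ω : Ω), Y n ω = if U n ω = 1 then X n ω else Y (n - 1) ω)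
    (m : ℕ)
    -- `(X_n)` is lag-`m*` tail independent for all `m* ≥ max(1, m-κ+1)`
    (hXti : ∀ m' : ℕ, max 1 (m - κ + 1) ≤ m' → ∀ n : ℤ,
      Tendsto (fun x : ℝ =>
          (P {ω | x < X (n + (m' : ℤ)) ω ∧ x < X n ω}).toReal /
            (P {ω | x < X n ω}).toReal)
        atTop (nhds 0)) :
    ∀ n : ℤ, Tendsto (fun x : ℝ =>
        (P {ω | x < Y (n + (m : ℤ)) ω ∧ x < Y n ω}).toReal /
          (P {ω | x < Y n ω}).toReal)
      atTop (nhds (if m ≤ κ - 1 then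
        (P {ω | ∀ j ∈ Finset.Icc (1 : ℤ) (m : ℤ), U j ω = 0}).toReal else 0)) := by
  intro n
  have hU : Measurable fun ω (k : ℤ) => U k ω := measurable_pi_lambda _ hUmeas
  have hrun := ae_notMem_zerosOn_Ioc (U := fun ω k => U k ω) hnoκ
  have hlim := tendsto_tailRatio_stopped (measurable_pi_lambda _ hXmeas) hU hindep
    (fun ω k => hU01 k ω) (fun ω k => hrec k ω) hrun
    (fun x hx t => measure_lt_eq_one_sub_of_frechet (hXmeas t) (hXF t) hx)
    (fun x hx => one_sub_ofReal_exp_neg_inv_ne_zero hx) (m := m)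
    (fun s t hst hlag => by
      have := hXti (t - s).toNat (by omega) s
      rwa [show s + ((t - s).toNat : ℤ) = t by omega] at this) n
  suffices hval : (if m ≤ κ - 1 then
      (P {ω | ∀ j ∈ Finset.Icc (1 : ℤ) (m : ℤ), U j ω = 0}).toReal else 0) =
      (P ((fun ω k => U k ω) ⁻¹' zerosOn (Set.Ioc n (n + m)))).toReal by
    rw [hval]
    exact hlim
  split_ifs with hmκ
  · rw [measure_preimage_zerosOn_Ioc_add hU hUstat]
    congr 2
    ext ω
    simp only [Set.mem_preimage, zerosOn, Set.mem_ofPred_eq, Finset.mem_Icc, Set.mem_Ioc]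
    exact forall_congr' fun j => imp_congr_left (by omega)
  · have hnull := measure_eq_zero_iff_ae_notMem.2 (hrun.mono fun ω h => h (n + m))
    rw [measure_mono_null (Set.preimage_mono (zerosOn_anti
      (Set.Ioc_subset_Ioc_left (by omega)))) hnull, ENNReal.toReal_zero]

/-- In the stopped clock model, if `(X_n)` is lag-`m*` tail
independent for all `m* ≥ max(1, m-κ+1)`, then
`λ(Y_{n+m}|Y_n) = P(U_1 = 0, ..., U_m = 0)·1_{m ≤ κ-1}`; in particular `(Y_n)`
is lag-`m` tail independent for all `m ≥ κ`. -/
theorem stopped_clock_lagm_tail_independence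
    {Ω : Type*} [MeasurableSpace Ω] (P : Measure Ω) [IsProbabilityMeasure P]
    (κ : ℕ) (hκ : 1 ≤ κ)
    (X : ℤ → Ω → ℝ) (U : ℤ → Ω → ℕ) (Y : ℤ → Ω → ℝ)
    (hXmeas : ∀ n, Measurable (X n)) (hUmeas : ∀ n, Measurable (U n))
    (hU01 : ∀ (n : ℤ) (ω : Ω), U n ω = 0 ∨ U n ω = 1)
    (hXF : ∀ (n : ℤ) (x : ℝ), 0 < x →
      P {ω | X n ω ≤ x} = ENNReal.ofReal (Real.exp (-1 / x)))
    (hXstat : ∀ k : ℤ, Measure.map (fun ω (n : ℤ) => X (n + k) ω) P =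
      Measure.map (fun ω (n : ℤ) => X n ω) P)
    (hUstat : ∀ k : ℤ, Measure.map (fun ω (n : ℤ) => U (n + k) ω) P =
      Measure.map (fun ω (n : ℤ) => U n ω) P)
    (hindep : IndepFun (fun ω (n : ℤ) => X n ω) (fun ω (n : ℤ) => U n ω) P)
    (hnoκ : ∀ n : ℤ, P {ω | ∀ j ∈ Finset.range κ, U (n + (j : ℤ)) ω = 0} = 0)
    (hrec : ∀ (n : ℤ) (ω : Ω), Y n ω = if U n ω = 1 then X n ω else Y (n - 1) ω)
    (hYdec : ∀ n : ℤ, ∀ᵐ ω ∂P, ∃ i ∈ Finset.range κ,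
      U (n - (i : ℤ)) ω = 1 ∧ (∀ j ∈ Finset.range i, U (n - (j : ℤ)) ω = 0) ∧
      Y n ω = X (n - (i : ℤ)) ω)
    (m : ℕ) (hm : 1 ≤ m)
    -- `(X_n)` is lag-`m*` tail independent for all `m* ≥ max(1, m-κ+1)`
    (hXti : ∀ m' : ℕ, max 1 (m - κ + 1) ≤ m' → ∀ n : ℤ,
      Tendsto (fun x : ℝ =>
          (P {ω | x < X (n + (m' : ℤ)) ω ∧ x < X n ω}).toReal /
            (P {ω | x < X n ω}).toReal)
        atTop (nhds 0)) :
    ∀ n : ℤ, Tendsto (fun x : ℝ =>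
        (P {ω | x < Y (n + (m : ℤ)) ω ∧ x < Y n ω}).toReal /
          (P {ω | x < Y n ω}).toReal)
      atTop (nhds (if m ≤ κ - 1 then
        (P {ω | ∀ j ∈ Finset.Icc (1 : ℤ) (m : ℤ), U j ω = 0}).toReal else 0)) :=
  stopped_clock_lagm_tail_independence_general P κ X U Y hXmeas hUmeas hU01 hXF hUstat hindep hnoκ
    hrec m hXti
end
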